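/- arXiv:2112.10186 — 2 statements merged into one kernel-verified Lean document; each statement's English description precedes it below -/
import Mathlib

section
/- Let A be a bounded linear operator on a complex Hilbert space H, K a nonempty set of unit vectors, ber(T)=sup_{k∈K}|⟨T k,k⟩|, ‖T‖_ber = sup_{k,l∈K}|⟨T k,l⟩|. Then ‖A A* − A*A‖_ber ≤ ber(A*A + A A*). -/
/-!
Writing `S = A†A + AA†`, one has `⟪S k, k⟫ = ‖A k‖² + ‖A† k‖²`, so `ber S` dominates
`‖A k‖² + ‖A† k‖²` for every `k ∈ K`. On the other side
`⟪(AA† - A†A) k, l⟫ = ⟪A† k, A† l⟫ - ⟪A k, A l⟫`, whose modulus is at most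
`‖A† k‖ ‖A† l‖ + ‖A k‖ ‖A l‖ ≤ ½ (‖A k‖² + ‖A† k‖²) + ½ (‖A l‖² + ‖A† l‖²) ≤ ber S`.
-/

open ContinuousLinearMap

noncomputable def berNum {H : Type*} [NormedAddCommGroup H] [InnerProductSpace ℂ H]
    (K : Set H) (T : H →L[ℂ] H) : ℝ :=
  sSup {x : ℝ | ∃ k ∈ K, x = ‖(inner ℂ (T k) k : ℂ)‖}

noncomputable def berNorm {H : Type*} [NormedAddCommGroup H] [InnerProductSpace ℂ H]
    (K : Set H) (T : H →L[ℂ] H) : ℝ :=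
  sSup {x : ℝ | ∃ k ∈ K, ∃ l ∈ K, x = ‖(inner ℂ (T k) l : ℂ)‖}

lemma mul_add_mul_le_of_sq_add_sq_le {a b c d M : ℝ} (hab : a ^ 2 + b ^ 2 ≤ M)
    (hcd : c ^ 2 + d ^ 2 ≤ M) : a * c + b * d ≤ M := by
  nlinarith [sq_nonneg (a - c), sq_nonneg (b - d)]

section Berezin

variable {H : Type*} [NormedAddCommGroup H] [InnerProductSpace ℂ H]

lemma berNum_nonneg (K : Set H) (T : H →L[ℂ] H) : 0 ≤ berNum K T :=
  Real.sSup_nonneg <| by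
    rintro _ ⟨k, -, rfl⟩
    exact norm_nonneg _

lemma norm_inner_apply_self_le_berNum {K : Set H} (hK : ∀ k ∈ K, ‖k‖ ≤ 1) (T : H →L[ℂ] H)
    {k : H} (hk : k ∈ K) : ‖(inner ℂ (T k) k : ℂ)‖ ≤ berNum K T := by
  have hbdd : BddAbove {x : ℝ | ∃ k ∈ K, x = ‖(inner ℂ (T k) k : ℂ)‖} := by
    refine ⟨‖T‖, ?_⟩
    rintro _ ⟨k, hk, rfl⟩
    calc ‖(inner ℂ (T k) k : ℂ)‖ ≤ ‖T‖ * ‖k‖ * ‖k‖ :=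
          (norm_inner_le_norm _ _).trans (by gcongr; exact T.le_opNorm k)
      _ ≤ ‖T‖ * 1 * 1 := by gcongr <;> exact hK k hk
      _ = ‖T‖ := by ring
  exact le_csSup hbdd ⟨k, hk, rfl⟩

variable [CompleteSpace H]

lemma inner_adjoint_mul_self_add_mul_adjoint_apply_self (A : H →L[ℂ] H) (k : H) :
    inner ℂ ((adjoint A * A + A * adjoint A) k) k = ((‖A k‖ ^ 2 + ‖adjoint A k‖ ^ 2 : ℝ) : ℂ) := by
  rw [add_apply, inner_add_left, mul_apply_eq_comp, mul_apply_eq_comp,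
    adjoint_inner_left A k (A k), ← adjoint_inner_right A (adjoint A k) k,
    inner_self_eq_norm_sq_to_K, inner_self_eq_norm_sq_to_K]
  push_cast
  rfl

lemma inner_commutator_adjoint_apply (A : H →L[ℂ] H) (k l : H) :
    inner ℂ ((A * adjoint A - adjoint A * A) k) l
      = inner ℂ (adjoint A k) (adjoint A l) - inner ℂ (A k) (A l) := by
  rw [sub_apply, inner_sub_left, mul_apply_eq_comp, mul_apply_eq_comp,
    ← adjoint_inner_right A (adjoint A k) l, adjoint_inner_left A l (A k)]

lemma norm_inner_commutator_adjoint_apply_le (A : H →L[ℂ] H) (k l : H) :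
    ‖(inner ℂ ((A * adjoint A - adjoint A * A) k) l : ℂ)‖
      ≤ ‖adjoint A k‖ * ‖adjoint A l‖ + ‖A k‖ * ‖A l‖ := by
  rw [inner_commutator_adjoint_apply]
  exact (norm_sub_le _ _).trans (add_le_add (norm_inner_le_norm _ _) (norm_inner_le_norm _ _))

end Berezin

theorem berNorm_commutator_general {H : Type*} [NormedAddCommGroup H] [InnerProductSpace ℂ H] [CompleteSpace H]
    (A : H →L[ℂ] H) (K : Set H) (hK1 : ∀ k ∈ K, ‖k‖ = 1) :
    berNorm K (A * adjoint A - adjoint A * A) ≤ berNum K (adjoint A * A + A * adjoint A) := by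
  have hnum : ∀ k ∈ K,
      ‖adjoint A k‖ ^ 2 + ‖A k‖ ^ 2 ≤ berNum K (adjoint A * A + A * adjoint A) := by
    intro k hk
    have h := norm_inner_apply_self_le_berNum (fun k hk ↦ (hK1 k hk).le)
      (adjoint A * A + A * adjoint A) hk
    rwa [inner_adjoint_mul_self_add_mul_adjoint_apply_self, Complex.norm_real,
      Real.norm_of_nonneg (by positivity), add_comm] at h
  refine Real.sSup_le ?_ (berNum_nonneg K _)
  rintro _ ⟨k, hk, l, hl, rfl⟩
  exact (norm_inner_commutator_adjoint_apply_le A k l).trans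
    (mul_add_mul_le_of_sq_add_sq_le (hnum k hk) (hnum l hl))

theorem berNorm_commutator {H : Type*} [NormedAddCommGroup H] [InnerProductSpace ℂ H] [CompleteSpace H]
    (A : H →L[ℂ] H) (K : Set H) (hK : K.Nonempty) (hK1 : ∀ k ∈ K, ‖k‖ = 1) :
    berNorm K (A * adjoint A - adjoint A * A) ≤ berNum K (adjoint A * A + A * adjoint A) :=
  berNorm_commutator_general A K hK1
end

section
/- Let A, B be bounded linear operators on a complex Hilbert space H, K a nonempty set of unit vectors, ber(T)=sup_{k∈K}|⟨T k,k⟩|, ‖T‖_ber=sup_{k,l∈K}|⟨T k,l⟩|. Then ‖A B‖_ber ≤ ber(A A*)^{1/2} · ber(B*B)^{1/2}. -/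
open ContinuousLinearMap

/-
Write ⟨A B k, l⟩ = ⟨B k, A* l⟩, so by Cauchy–Schwarz |⟨A B k, l⟩| ≤ ‖B k‖ ‖A* l‖, and
‖B k‖² = ⟨B* B k, k⟩ ≤ ber(B* B), ‖A* l‖² = ⟨A A* l, l⟩ ≤ ber(A A*).
-/

section Berezin

variable {H : Type*} [NormedAddCommGroup H] [InnerProductSpace ℂ H] {K : Set H}

theorem norm_inner_self_le_berNum (hK : ∀ k ∈ K, ‖k‖ ≤ 1) (T : H →L[ℂ] H) {k : H}
    (hk : k ∈ K) : ‖(inner ℂ (T k) k : ℂ)‖ ≤ berNum K T := by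
  refine le_csSup ⟨‖T‖, ?_⟩ ⟨k, hk, rfl⟩
  rintro x ⟨k', hk', rfl⟩
  calc ‖(inner ℂ (T k') k' : ℂ)‖ ≤ ‖T‖ * ‖k'‖ * ‖k'‖ :=
        (norm_inner_le_norm _ _).trans (by gcongr; exact T.le_opNorm k')
    _ ≤ ‖T‖ * 1 * 1 := by gcongr <;> exact hK k' hk'
    _ = ‖T‖ := by ring

theorem berNorm_le {T : H →L[ℂ] H} {c : ℝ} (hc : 0 ≤ c)
    (h : ∀ k ∈ K, ∀ l ∈ K, ‖(inner ℂ (T k) l : ℂ)‖ ≤ c) : berNorm K T ≤ c := by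
  refine Real.sSup_le ?_ hc
  rintro x ⟨k, hk, l, hl, rfl⟩
  exact h k hk l hl

variable [CompleteSpace H]

theorem norm_apply_le_sqrt_berNum_adjoint_mul_self (hK : ∀ k ∈ K, ‖k‖ ≤ 1)
    (B : H →L[ℂ] H) {k : H} (hk : k ∈ K) : ‖B k‖ ≤ √(berNum K (adjoint B * B)) := by
  have hBk : ‖(inner ℂ ((adjoint B * B) k) k : ℂ)‖ = ‖B k‖ ^ 2 := by
    rw [mul_apply_eq_comp, adjoint_inner_left, inner_self_eq_norm_sq_to_K]
    norm_cast
    exact abs_of_nonneg (sq_nonneg _)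
  exact Real.le_sqrt_of_sq_le (hBk ▸ norm_inner_self_le_berNum hK _ hk)

theorem norm_adjoint_apply_le_sqrt_berNum_mul_adjoint (hK : ∀ k ∈ K, ‖k‖ ≤ 1)
    (A : H →L[ℂ] H) {l : H} (hl : l ∈ K) : ‖adjoint A l‖ ≤ √(berNum K (A * adjoint A)) := by
  simpa only [adjoint_adjoint] using norm_apply_le_sqrt_berNum_adjoint_mul_self hK (adjoint A) hl

end Berezin

theorem berNorm_mul_general {H : Type*} [NormedAddCommGroup H] [InnerProductSpace ℂ H] [CompleteSpace H]
    (A B : H →L[ℂ] H) (K : Set H) (hK1 : ∀ k ∈ K, ‖k‖ = 1) :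
    berNorm K (A * B)
      ≤ Real.sqrt (berNum K (A * adjoint A)) * Real.sqrt (berNum K (adjoint B * B)) := by
  have hK : ∀ k ∈ K, ‖k‖ ≤ 1 := fun k hk => (hK1 k hk).le
  refine berNorm_le (by positivity) fun k hk l hl => ?_
  calc ‖(inner ℂ ((A * B) k) l : ℂ)‖ = ‖(inner ℂ (B k) (adjoint A l) : ℂ)‖ := by
        rw [mul_apply_eq_comp, adjoint_inner_right]
    _ ≤ ‖adjoint A l‖ * ‖B k‖ := (norm_inner_le_norm _ _).trans_eq (mul_comm _ _)
    _ ≤ _ := by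
        gcongr
        · exact norm_adjoint_apply_le_sqrt_berNum_mul_adjoint hK A hl
        · exact norm_apply_le_sqrt_berNum_adjoint_mul_self hK B hk

theorem berNorm_mul {H : Type*} [NormedAddCommGroup H] [InnerProductSpace ℂ H] [CompleteSpace H]
    (A B : H →L[ℂ] H) (K : Set H) (hK : K.Nonempty) (hK1 : ∀ k ∈ K, ‖k‖ = 1) :
    berNorm K (A * B)
      ≤ Real.sqrt (berNum K (A * adjoint A)) * Real.sqrt (berNum K (adjoint B * B)) :=
  berNorm_mul_general A B K hK1
end
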